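/- arXiv:2309.13712 — 6 statements merged into one kernel-verified Lean document; each statement's English description precedes it below -/
import Mathlib

section
/- Let A ∈ ℝ^{n×n}, B ∈ ℝ^{n×m}, δ ∈ ℝ^m with δ_j ≥ 0 for all j, v ∈ ℝ^n with all entries positive, S ∈ ℝ^{m×n}, and M ∈ ℝ^{n×n}. Suppose (a) Σ_{j=1}^n M_{ij} < v_i for every i ∈ {1,…,n}, and (b) for every Δ ∈ ℝ^m with |Δ_j| ≤ δ_j for all j, the entrywise inequalities -M ≤ A·diag(v) + B(I_m + diag(Δ))S ≤ M hold. Then the controller K = S·diag(v)^{-1} extended superstabilizes the entire perturbed family: for every Δ ∈ ℝ^m with |Δ_j| ≤ δ_j for all j, the closed-loop matrix A + B(I_m + diag(Δ))K is extended superstable with weights v, i.e., Σ_{j=1}^n |(A + B(I_m + diag(Δ))K)_{ij}| v_j < v_i for every i. -/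
/-- If `∑_j M i j < v i` for all `i` and
`-M ≤ A diag(v) + B (I + diag Δ) S ≤ M` entrywise for all `Δ` in the box
`∏_j [-δ_j, δ_j]`, then `K = S diag(v)⁻¹` extended superstabilizes the whole
perturbed family with weights `v`. -/
theorem stmt_7 (n m : ℕ) (A : Matrix (Fin n) (Fin n) ℝ) (B : Matrix (Fin n) (Fin m) ℝ)
    (δ : Fin m → ℝ) (hδ : ∀ j, 0 ≤ δ j)
    (v : Fin n → ℝ) (hv : ∀ i, 0 < v i)
    (S : Matrix (Fin m) (Fin n) ℝ) (M : Matrix (Fin n) (Fin n) ℝ)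
    (ha : ∀ i, ∑ j, M i j < v i)
    (hb : ∀ Δ : Fin m → ℝ, (∀ j, |Δ j| ≤ δ j) → ∀ i j,
      -(M i j) ≤ (A * Matrix.diagonal v
          + B * ((1 : Matrix (Fin m) (Fin m) ℝ) + Matrix.diagonal Δ) * S) i j ∧
      (A * Matrix.diagonal v
          + B * ((1 : Matrix (Fin m) (Fin m) ℝ) + Matrix.diagonal Δ) * S) i j ≤ M i j) :
    ∀ Δ : Fin m → ℝ, (∀ j, |Δ j| ≤ δ j) → ∀ i,
      ∑ j, |(A + B * ((1 : Matrix (Fin m) (Fin m) ℝ) + Matrix.diagonal Δ) *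
          (S * Matrix.diagonal (fun i => (v i)⁻¹))) i j| * v j < v i := by
  intro Δ hΔ i
  set X := A + B * ((1 : Matrix (Fin m) (Fin m) ℝ) + Matrix.diagonal Δ) *
      (S * Matrix.diagonal (fun i => (v i)⁻¹)) with hX
  have hId : X * Matrix.diagonal v = A * Matrix.diagonal v
      + B * ((1 : Matrix (Fin m) (Fin m) ℝ) + Matrix.diagonal Δ) * S := by
    have hd : Matrix.diagonal (fun i => (v i)⁻¹) * Matrix.diagonal v
        = (1 : Matrix (Fin n) (Fin n) ℝ) := by
      have h1 : (fun i => (v i)⁻¹ * v i) = fun _ : Fin n => (1 : ℝ) :=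
        funext fun i => inv_mul_cancel₀ (hv i).ne'
      rw [Matrix.diagonal_mul_diagonal, h1, Matrix.diagonal_one]
    rw [hX, add_mul,
      Matrix.mul_assoc (B * ((1 : Matrix (Fin m) (Fin m) ℝ) + Matrix.diagonal Δ)),
      Matrix.mul_assoc S, hd, Matrix.mul_one]
  have key : ∀ j, |X i j| * v j ≤ M i j := by
    intro j
    have h := hb Δ hΔ i j
    have h2 : X i j * v j = (A * Matrix.diagonal v
        + B * ((1 : Matrix (Fin m) (Fin m) ℝ) + Matrix.diagonal Δ) * S) i j := by
      rw [← hId, Matrix.mul_diagonal]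
    have : |X i j * v j| ≤ M i j := by
      rw [h2]; exact abs_le.mpr ⟨h.1, h.2⟩
    rwa [abs_mul, abs_of_pos (hv j)] at this
  calc ∑ j, |X i j| * v j ≤ ∑ j, M i j := Finset.sum_le_sum fun j _ => key j
    _ < v i := ha i
end

section
/- Let A ∈ ℝ^{n×n}, B ∈ ℝ^{n×m}, δ ∈ ℝ^m with δ_j ≥ 0 for all j, v ∈ ℝ^n, S ∈ ℝ^{m×n}, and M ∈ ℝ^{n×n}, and write Y = diag(v). Then the following are equivalent: (i) for every Δ ∈ ℝ^m with |Δ_j| ≤ δ_j for all j, the entrywise inequalities -M ≤ A Y + B(I_m + diag(Δ))S ≤ M hold; (ii) for every vertex γ ∈ ∏_{j=1}^m {-δ_j, δ_j}, the entrywise inequalities -M ≤ A Y + B(I_m + diag(γ))S ≤ M hold. -/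
private lemma entry_eq (n m : ℕ) (A : Matrix (Fin n) (Fin n) ℝ) (B : Matrix (Fin n) (Fin m) ℝ)
    (v : Fin n → ℝ) (S : Matrix (Fin m) (Fin n) ℝ) (Δ : Fin m → ℝ) (i j : Fin n) :
    (A * Matrix.diagonal v
        + B * ((1 : Matrix (Fin m) (Fin m) ℝ) + Matrix.diagonal Δ) * S) i j
      = (A * Matrix.diagonal v + B * S) i j + ∑ k, Δ k * (B i k * S k j) := by
  have h1 : B * ((1 : Matrix (Fin m) (Fin m) ℝ) + Matrix.diagonal Δ) * S
      = B * S + B * Matrix.diagonal Δ * S := by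
    rw [Matrix.mul_add, Matrix.add_mul, Matrix.mul_one]
  rw [h1]
  simp only [Matrix.add_apply, Matrix.mul_apply, Matrix.mul_diagonal, add_assoc]
  congr 1
  congr 1
  refine Finset.sum_congr rfl fun k _ => ?_
  have hs : (∑ x : Fin m, B i x * Matrix.diagonal Δ x k) = B i k * Δ k := by
    rw [Finset.sum_eq_single k]
    · simp
    · intro b _ hb
      simp [Matrix.diagonal_apply_ne _ hb]
    · simp
  rw [hs]
  ring

/-- The entrywise inequalities
`-M ≤ A Y + B (I + diag Δ) S ≤ M` hold for all `Δ` in the box `∏_j [-δ_j, δ_j]`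
iff they hold for all vertices `γ ∈ ∏_j {-δ_j, δ_j}`, where `Y = diag v`. -/
theorem stmt_8 (n m : ℕ) (A : Matrix (Fin n) (Fin n) ℝ) (B : Matrix (Fin n) (Fin m) ℝ)
    (δ : Fin m → ℝ) (hδ : ∀ j, 0 ≤ δ j)
    (v : Fin n → ℝ) (S : Matrix (Fin m) (Fin n) ℝ) (M : Matrix (Fin n) (Fin n) ℝ) :
    (∀ Δ : Fin m → ℝ, (∀ j, |Δ j| ≤ δ j) → ∀ i j,
      -(M i j) ≤ (A * Matrix.diagonal v
          + B * ((1 : Matrix (Fin m) (Fin m) ℝ) + Matrix.diagonal Δ) * S) i j ∧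
      (A * Matrix.diagonal v
          + B * ((1 : Matrix (Fin m) (Fin m) ℝ) + Matrix.diagonal Δ) * S) i j ≤ M i j)
    ↔
    (∀ γ : Fin m → ℝ, (∀ j, γ j = -(δ j) ∨ γ j = δ j) → ∀ i j,
      -(M i j) ≤ (A * Matrix.diagonal v
          + B * ((1 : Matrix (Fin m) (Fin m) ℝ) + Matrix.diagonal γ) * S) i j ∧
      (A * Matrix.diagonal v
          + B * ((1 : Matrix (Fin m) (Fin m) ℝ) + Matrix.diagonal γ) * S) i j ≤ M i j) := by
  constructor
  · intro h γ hγ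
    refine h γ (fun j => ?_)
    rcases hγ j with hh | hh <;> rw [hh] <;>
      simp [abs_of_nonneg (hδ j), abs_neg, le_refl]
  · intro h Δ hΔ i j
    set c : ℝ := (A * Matrix.diagonal v + B * S) i j with hc
    set w : Fin m → ℝ := fun k => B i k * S k j with hw
    set γ : Fin m → ℝ := fun k => if 0 ≤ w k then δ k else -(δ k) with hγdef
    have hγvert : ∀ k, γ k = -(δ k) ∨ γ k = δ k := fun k => by
      by_cases hk : 0 ≤ w k <;> simp [hγdef, hk]
    have hγ'vert : ∀ k, (-γ) k = -(δ k) ∨ (-γ) k = δ k := fun k => by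
      rcases hγvert k with hh | hh <;> simp [hh]
    have hub : ∀ k, Δ k * w k ≤ γ k * w k := by
      intro k
      by_cases hk : 0 ≤ w k
      · simp only [hγdef, if_pos hk]
        exact mul_le_mul_of_nonneg_right (le_trans (le_abs_self _) (hΔ k)) hk
      · simp only [hγdef, if_neg hk]
        have : -(δ k) ≤ Δ k := neg_le_of_abs_le (hΔ k)
        exact mul_le_mul_of_nonpos_right this (le_of_not_ge hk)
    have hsub : ∑ k, Δ k * w k ≤ ∑ k, γ k * w k :=
      Finset.sum_le_sum fun k _ => hub k
    have hslb : ∑ k, (-γ) k * w k ≤ ∑ k, Δ k * w k := by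
      refine Finset.sum_le_sum fun k _ => ?_
      simp only [Pi.neg_apply]
      by_cases hk : 0 ≤ w k
      · simp only [hγdef, if_pos hk]
        have : -(δ k) ≤ Δ k := neg_le_of_abs_le (hΔ k)
        exact mul_le_mul_of_nonneg_right this hk
      · simp only [hγdef, if_neg hk, neg_neg]
        exact mul_le_mul_of_nonpos_right (le_trans (le_abs_self _) (hΔ k)) (le_of_not_ge hk)
    have hU := (h γ hγvert i j).2
    have hL := (h (-γ) hγ'vert i j).1
    rw [entry_eq n m A B v S γ i j] at hU
    rw [entry_eq n m A B v S (-γ) i j] at hL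
    rw [entry_eq n m A B v S Δ i j]
    constructor
    · calc -(M i j) ≤ c + ∑ k, (-γ) k * w k := hL
        _ ≤ c + ∑ k, Δ k * w k := by linarith
    · calc c + ∑ k, Δ k * w k ≤ c + ∑ k, γ k * w k := by linarith
        _ ≤ M i j := hU
end

section
/- Let A ∈ ℝ^{n×n}, B ∈ ℝ^{n×m}, v ∈ ℝ^n, S ∈ ℝ^{m×n}, and let δ, δ' ∈ ℝ^m satisfy 0 ≤ δ'_j ≤ δ_j for all j. If for every i ∈ {1,…,n}, every α ∈ {-1,1}^n, and every β ∈ ∏_{j=1}^m {1-δ_j, 1+δ_j} it holds that Σ_{j=1}^n α_j (A_{ij} v_j + Σ_{k=1}^m β_k B_{ik} S_{kj}) < v_i, then the same inequalities hold for δ': for every i, every α ∈ {-1,1}^n, and every β' ∈ ∏_{j=1}^m {1-δ'_j, 1+δ'_j}, Σ_{j=1}^n α_j (A_{ij} v_j + Σ_{k=1}^m β'_k B_{ik} S_{kj}) < v_i. That is, a controller feasible for quantization level δ remains feasible for every finer quantization level δ' ≤ δ. -/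
/-- A controller feasible for the sign-enumerated quantized
superstabilization inequalities at quantization level `δ` remains feasible for
every finer level `δ'` with `0 ≤ δ' ≤ δ` componentwise. -/
theorem stmt_11 (n m : ℕ) (A : Matrix (Fin n) (Fin n) ℝ) (B : Matrix (Fin n) (Fin m) ℝ)
    (v : Fin n → ℝ) (S : Matrix (Fin m) (Fin n) ℝ)
    (δ δ' : Fin m → ℝ) (hδ' : ∀ j, 0 ≤ δ' j) (hle : ∀ j, δ' j ≤ δ j)
    (h : ∀ i : Fin n, ∀ α : Fin n → ℝ, (∀ j, α j = -1 ∨ α j = 1) →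
      ∀ β : Fin m → ℝ, (∀ k, β k = 1 - δ k ∨ β k = 1 + δ k) →
        ∑ j, α j * (A i j * v j + ∑ k, β k * B i k * S k j) < v i) :
    ∀ i : Fin n, ∀ α : Fin n → ℝ, (∀ j, α j = -1 ∨ α j = 1) →
      ∀ β' : Fin m → ℝ, (∀ k, β' k = 1 - δ' k ∨ β' k = 1 + δ' k) →
        ∑ j, α j * (A i j * v j + ∑ k, β' k * B i k * S k j) < v i := by
  intro i α hα β' hβ'
  set d : Fin m → ℝ := fun k => ∑ j, α j * (B i k * S k j) with hd
  set β : Fin m → ℝ := fun k => if 0 ≤ d k then 1 + δ k else 1 - δ k with hβ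
  have key : ∀ γ : Fin m → ℝ,
      ∑ j, α j * (A i j * v j + ∑ k, γ k * B i k * S k j)
        = (∑ j, α j * (A i j * v j)) + ∑ k, γ k * d k := by
    intro γ
    simp only [mul_add, Finset.sum_add_distrib]
    congr 1
    simp only [Finset.mul_sum]
    rw [Finset.sum_comm]
    refine Finset.sum_congr rfl fun k _ => ?_
    simp only [hd, Finset.mul_sum]
    exact Finset.sum_congr rfl fun j _ => by ring
  have hβmem : ∀ k, β k = 1 - δ k ∨ β k = 1 + δ k := by
    intro k; by_cases hc : 0 ≤ d k <;> simp [hβ, hc]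
  have hmain := h i α hα β hβmem
  rw [key] at hmain ⊢
  refine lt_of_le_of_lt ?_ hmain
  apply add_le_add_right
  apply Finset.sum_le_sum
  intro k _
  have hb' : 1 - δ k ≤ β' k ∧ β' k ≤ 1 + δ k := by
    rcases hβ' k with hc | hc <;> rw [hc] <;>
      constructor <;> nlinarith [hδ' k, hle k]
  by_cases hc : 0 ≤ d k
  · have : β k = 1 + δ k := by simp [hβ, hc]
    rw [this]; nlinarith [hb'.2]
  · have : β k = 1 - δ k := by simp [hβ, hc]
    rw [this]; nlinarith [hb'.1, le_of_not_ge hc]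
end

section
/- (Extended Farkas Lemma.) Let G₁ ∈ ℝ^{m×n}, h₁ ∈ ℝ^m, G₂ ∈ ℝ^{p×n}, h₂ ∈ ℝ^p, and define the polytopes P₁ = {x ∈ ℝ^n : G₁ x ≤ h₁} and P₂ = {x ∈ ℝ^n : G₂ x ≤ h₂}, where the inequalities are componentwise. Assume P₁ is nonempty. Then P₁ ⊆ P₂ if and only if there exists a matrix Z ∈ ℝ^{p×m} with all entries nonnegative such that Z G₁ = G₂ and Z h₁ ≤ h₂ (componentwise). -/
open Finset

section Carath
variable {E : Type*} [AddCommGroup E] [Module ℝ E] {ι : Type*} [Fintype ι] [DecidableEq ι]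

/-- Carathéodory for cones: a nonnegative combination can be rewritten as one
supported on a linearly independent subfamily. -/
lemma cone_caratheodory (v : ι → E) (s : Finset ι) :
    ∀ (c : ι → ℝ), (∀ i, 0 ≤ c i) → (∀ i ∉ s, c i = 0) →
    ∃ (t : Finset ι) (d : ι → ℝ), LinearIndependent ℝ (fun i : t => v i) ∧
      (∀ i, 0 ≤ d i) ∧ (∀ i ∉ t, d i = 0) ∧ ∑ i, d i • v i = ∑ i, c i • v i := by
  induction s using Finset.strongInduction with
  | _ s IH =>
    intro c hc hcs
    by_cases hli : LinearIndependent ℝ (fun i : s => v i)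
    · exact ⟨s, c, hli, hc, hcs, rfl⟩
    · obtain ⟨g, hg0, i₁, hg1⟩ := Fintype.not_linearIndependent_iff.mp hli
      set G : ι → ℝ := fun i => if h : i ∈ s then g ⟨i, h⟩ else 0 with hG
      have hGs : ∀ i ∉ s, G i = 0 := by intro i hi; simp [hG, hi]
      have hGsum : ∑ i, G i • v i = 0 := by
        rw [← Finset.sum_subset (Finset.subset_univ s) (fun i _ hi => by simp [hGs i hi])]
        rw [← Finset.sum_attach s (fun i => G i • v i)]
        simpa [hG] using hg0
      have hGne : G (i₁ : ι) ≠ 0 := by simp [hG, i₁.2, hg1]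
      -- get an H with a positive entry
      obtain ⟨H, hHsum, hHs, i₂, hi₂s, hi₂pos⟩ :
          ∃ H : ι → ℝ, ∑ i, H i • v i = 0 ∧ (∀ i ∉ s, H i = 0) ∧
            ∃ i, i ∈ s ∧ 0 < H i := by
        rcases lt_or_gt_of_ne hGne with h | h
        · refine ⟨-G, by simpa using hGsum, fun i hi => by simp [hGs i hi], i₁, i₁.2, by
            simpa using h⟩
        · exact ⟨G, hGsum, hGs, i₁, i₁.2, h⟩
      set I : Finset ι := s.filter (fun i => 0 < H i) with hI
      have hIne : I.Nonempty := ⟨i₂, by simp [hI, hi₂s, hi₂pos]⟩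
      obtain ⟨i₀, hi₀I, hmin⟩ := I.exists_min_image (fun i => c i / H i) hIne
      have hi₀s : i₀ ∈ s := (Finset.mem_filter.mp hi₀I).1
      have hHi₀ : 0 < H i₀ := (Finset.mem_filter.mp hi₀I).2
      set r : ℝ := c i₀ / H i₀ with hr
      have hr0 : 0 ≤ r := div_nonneg (hc i₀) hHi₀.le
      set d : ι → ℝ := fun i => c i - r * H i with hd
      have hd0 : ∀ i, 0 ≤ d i := by
        intro i
        by_cases hpos : 0 < H i
        · have his : i ∈ s := by
            by_contra hns; rw [hHs i hns] at hpos; exact lt_irrefl 0 hpos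
          have : r ≤ c i / H i := hmin i (Finset.mem_filter.mpr ⟨his, hpos⟩)
          have := (le_div_iff₀ hpos).mp this
          simp [hd]; linarith
        · push_neg at hpos
          have : r * H i ≤ 0 := mul_nonpos_of_nonneg_of_nonpos hr0 hpos
          have := hc i
          simp [hd]; linarith
      have hdi₀ : d i₀ = 0 := by
        simp [hd, hr, div_mul_cancel₀ _ hHi₀.ne']
      have hdsupp : ∀ i ∉ s.erase i₀, d i = 0 := by
        intro i hi
        rw [Finset.mem_erase] at hi
        push_neg at hi
        by_cases h : i = i₀
        · rw [h]; exact hdi₀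
        · have h2 := hi h
          simp [hd, hcs i h2, hHs i h2]
      have hdsum : ∑ i, d i • v i = ∑ i, c i • v i := by
        simp only [hd, sub_smul, mul_smul, Finset.sum_sub_distrib]
        rw [← Finset.smul_sum, hHsum, smul_zero, sub_zero]
      obtain ⟨t, d', h1, h2, h3, h4⟩ := IH (s.erase i₀) (Finset.erase_ssubset hi₀s) d hd0 hdsupp
      exact ⟨t, d', h1, h2, h3, h4.trans hdsum⟩
end Carath

section Closed
variable {ι : Type*} [Fintype ι] [DecidableEq ι] {κ : Type*} [Fintype κ]

local notation "E" κ => EuclideanSpace ℝ κ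

/-- The conical hull of finitely many vectors is closed. -/
lemma cone_isClosed (v : ι → EuclideanSpace ℝ κ) :
    IsClosed {x : EuclideanSpace ℝ κ | ∃ c : ι → ℝ, (∀ i, 0 ≤ c i) ∧ ∑ i, c i • v i = x} := by
  have key : {x : EuclideanSpace ℝ κ | ∃ c : ι → ℝ, (∀ i, 0 ≤ c i) ∧ ∑ i, c i • v i = x} =
      ⋃ (t : Finset ι) (_ : LinearIndependent ℝ (fun i : t => v i)),
        (fun c : t → ℝ => ∑ i, c i • v (i : ι)) '' {c | ∀ i, 0 ≤ c i} := by
    ext x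
    simp only [Set.mem_setOf_eq, Set.mem_iUnion, Set.mem_image]
    constructor
    · rintro ⟨c, hc, rfl⟩
      obtain ⟨t, d, hli, hd0, hdt, hdsum⟩ := cone_caratheodory v Finset.univ c hc (by simp)
      refine ⟨t, hli, fun i : t => d i, fun i => hd0 i, ?_⟩
      rw [← hdsum, ← Finset.sum_subset (Finset.subset_univ t)
        (fun i _ hi => by rw [hdt i hi, zero_smul]),
        ← Finset.sum_attach t (fun i => d i • v i), Finset.univ_eq_attach]
    · rintro ⟨t, hli, c, hc, rfl⟩
      refine ⟨fun i => if h : i ∈ t then c ⟨i, h⟩ else 0, fun i => by by_cases h : i ∈ t <;> simp [h] <;> exact hc ⟨i, h⟩, ?_⟩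
      rw [← Finset.sum_subset (Finset.subset_univ t) (fun i _ hi => by simp [hi]),
        ← Finset.sum_attach t (fun i => (if h : i ∈ t then c ⟨i, h⟩ else 0) • v i)]
      exact Finset.sum_congr rfl (fun i _ => by simp [i.2])
  rw [key]
  apply isClosed_iUnion_of_finite
  intro t
  apply isClosed_iUnion_of_finite
  intro hli
  set f : (t → ℝ) →ₗ[ℝ] EuclideanSpace ℝ κ :=
    { toFun := fun c => ∑ i, c i • v (i : ι)
      map_add' := fun c c' => by simp [add_smul, Finset.sum_add_distrib]
      map_smul' := fun r c => by simp [smul_smul, Finset.smul_sum] } with hf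
  have hinj : Function.Injective f := by
    rw [← LinearMap.ker_eq_bot, LinearMap.ker_eq_bot']
    intro g hg
    exact funext (Fintype.linearIndependent_iff.mp hli g hg)
  have hcl : IsClosed {c : t → ℝ | ∀ i, 0 ≤ c i} := by
    have : {c : t → ℝ | ∀ i, 0 ≤ c i} = ⋂ i, {c | 0 ≤ c i} := by ext; simp
    rw [this]
    exact isClosed_iInter fun i => isClosed_le continuous_const (continuous_apply i)
  exact (f.isClosedEmbedding_of_injective (LinearMap.ker_eq_bot.mpr hinj)).isClosedMap _ hcl
end Closed

section Farkas
open RealInnerProductSpace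
variable {ι : Type*} [Fintype ι] [DecidableEq ι] {κ : Type*} [Fintype κ] [DecidableEq κ]

/-- Farkas alternative: either `b` is a nonnegative combination of the `v i`,
or some `y` separates. -/
lemma farkas_alternative (v : ι → EuclideanSpace ℝ κ) (b : EuclideanSpace ℝ κ) :
    (∃ c : ι → ℝ, (∀ i, 0 ≤ c i) ∧ ∑ i, c i • v i = b) ∨
      (∃ y : EuclideanSpace ℝ κ, (∀ i, 0 ≤ ⟪v i, y⟫) ∧ ⟪y, b⟫ < 0) := by
  by_cases hb : ∃ c : ι → ℝ, (∀ i, 0 ≤ c i) ∧ ∑ i, c i • v i = b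
  · exact Or.inl hb
  · right
    set K : ConvexCone ℝ (EuclideanSpace ℝ κ) :=
      { carrier := {x | ∃ c : ι → ℝ, (∀ i, 0 ≤ c i) ∧ ∑ i, c i • v i = x}
        smul_mem' := by
          rintro r hr x ⟨c, hc, rfl⟩
          exact ⟨fun i => r * c i, fun i => mul_nonneg hr.le (hc i), by
            simp [Finset.smul_sum, mul_smul]⟩
        add_mem' := by
          rintro x ⟨c, hc, rfl⟩ y ⟨c', hc', rfl⟩
          exact ⟨fun i => c i + c' i, fun i => add_nonneg (hc i) (hc' i), by
            simp [add_smul, Finset.sum_add_distrib]⟩ } with hK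
    have hne : ((K : Set (EuclideanSpace ℝ κ))).Nonempty :=
      ⟨0, ⟨0, fun i => le_refl 0, by simp⟩⟩
    have hcl : IsClosed (K : Set (EuclideanSpace ℝ κ)) := cone_isClosed v
    have hbK : b ∉ K := hb
    let C : ProperCone ℝ (EuclideanSpace ℝ κ) :=
      { carrier := K
        add_mem' := fun hx hy => K.add_mem hx hy
        zero_mem' := ⟨0, fun i => le_refl 0, by simp⟩
        smul_mem' := by
          rintro r x ⟨c, hc, rfl⟩
          exact ⟨fun i => (r : ℝ) * c i, fun i => mul_nonneg r.2 (hc i), by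
            simp [Finset.smul_sum, mul_smul, NNReal.smul_def]⟩
        isClosed' := hcl }
    obtain ⟨y, hy1, hy2⟩ := ProperCone.hyperplane_separation' C (x₀ := b) hbK
    refine ⟨y, fun i => ?_, by rw [real_inner_comm]; exact hy2⟩
    apply hy1
    exact ⟨fun j => if j = i then 1 else 0, fun j => by positivity, by simp⟩
end Farkas

section Affine
open RealInnerProductSpace

lemma euclid_sum_apply {κ ι : Type*} [Fintype κ] [Fintype ι] (f : ι → EuclideanSpace ℝ κ)
    (i : κ) : (∑ k, f k) i = ∑ k, f k i := by
  rw [WithLp.ofLp_sum]; exact Finset.sum_apply i Finset.univ _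

lemma affine_farkas {m n : ℕ} (G1 : Matrix (Fin m) (Fin n) ℝ) (h1 : Fin m → ℝ)
    (c : Fin n → ℝ) (d : ℝ)
    (hne : ∃ x : Fin n → ℝ, ∀ i, G1.mulVec x i ≤ h1 i)
    (h : ∀ x : Fin n → ℝ, (∀ i, G1.mulVec x i ≤ h1 i) → ∑ j, c j * x j ≤ d) :
    ∃ y : Fin m → ℝ, (∀ i, 0 ≤ y i) ∧ (∀ j, ∑ i, y i * G1 i j = c j) ∧
      ∑ i, y i * h1 i ≤ d := by
  classical
  set v : (Fin m ⊕ Unit) → EuclideanSpace ℝ (Fin n ⊕ Unit) :=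
    Sum.elim (fun j => WithLp.toLp 2 (Sum.elim (fun i => G1 j i) (fun _ => h1 j) : Fin n ⊕ Unit → ℝ))
      (fun _ => WithLp.toLp 2 (Sum.elim (fun _ => (0:ℝ)) (fun _ => 1) : Fin n ⊕ Unit → ℝ)) with hv
  set b : EuclideanSpace ℝ (Fin n ⊕ Unit) := WithLp.toLp 2 (Sum.elim c (fun _ => d) : Fin n ⊕ Unit → ℝ) with hb
  rcases farkas_alternative v b with ⟨cf, hcf, hsum⟩ | ⟨y, hy1, hy2⟩
  · -- extract the certificate
    refine ⟨fun j => cf (Sum.inl j), fun j => hcf _, ?_, ?_⟩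
    · intro j
      have := congrFun (congrArg (fun (z : EuclideanSpace ℝ (Fin n ⊕ Unit)) => (z : Fin n ⊕ Unit → ℝ)) hsum) (Sum.inl j)
      simp only at this
      rw [euclid_sum_apply] at this
      simpa [hv, hb, Fintype.sum_sum_type, PiLp.smul_apply, smul_eq_mul] using this
    · have := congrFun (congrArg (fun (z : EuclideanSpace ℝ (Fin n ⊕ Unit)) => (z : Fin n ⊕ Unit → ℝ)) hsum) (Sum.inr ())
      simp only at this
      rw [euclid_sum_apply] at this
      simp only [hv, hb, Fintype.sum_sum_type, PiLp.smul_apply, smul_eq_mul] at this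
      simp only [Sum.elim_inr, mul_one, Sum.elim_inl, mul_zero] at this ⊢
      have h0 : 0 ≤ cf (Sum.inr ()) := hcf _
      simp only [Finset.univ_unique, Finset.sum_singleton] at this
      linarith [this.le]
  · -- derive a contradiction
    exfalso
    set t : ℝ := y (Sum.inr ()) with ht
    set u : Fin n → ℝ := fun i => - y (Sum.inl i) with hu
    have ht0 : 0 ≤ t := by
      have := hy1 (Sum.inr ())
      simpa [hv, PiLp.inner_apply, RCLike.inner_apply, Fintype.sum_sum_type, ht] using this
    have hrow : ∀ j, G1.mulVec u j ≤ t * h1 j := by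
      intro j
      have := hy1 (Sum.inl j)
      simp only [hv, PiLp.inner_apply, RCLike.inner_apply, Fintype.sum_sum_type,
        Sum.elim_inl, Sum.elim_inr, starRingEnd_apply, star_trivial,
        Finset.univ_unique, Finset.sum_singleton] at this
      simp only [Matrix.mulVec, dotProduct, hu]
      have : 0 ≤ ∑ i, G1 j i * y (Sum.inl i) + h1 j * t := by
        convert this using 2
        · exact Finset.sum_congr rfl fun i _ => mul_comm _ _
        · exact mul_comm _ _
      have hsum' : ∑ i, G1 j i * (- y (Sum.inl i)) = - ∑ i, G1 j i * y (Sum.inl i) := by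
        simp [Finset.sum_neg_distrib]
      rw [hsum']
      linarith [this, mul_comm t (h1 j)]
    have hobj : t * d < ∑ i, c i * u i := by
      simp only [PiLp.inner_apply, RCLike.inner_apply, starRingEnd_apply, star_trivial,
        Fintype.sum_sum_type, hb, Sum.elim_inl, Sum.elim_inr,
        Finset.univ_unique, Finset.sum_singleton] at hy2
      have hsum' : ∑ i, c i * u i = - ∑ i, y (Sum.inl i) * c i := by
        simp [hu, mul_comm, Finset.sum_neg_distrib]
      rw [hsum']
      have : ∑ i, y (Sum.inl i) * c i + t * d < 0 := by
        convert hy2 using 2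
        · exact Finset.sum_congr rfl fun i _ => mul_comm _ _
        · exact mul_comm _ _
      linarith
    rcases eq_or_lt_of_le ht0 with hteq | htpos
    · -- t = 0
      obtain ⟨x0, hx0⟩ := hne
      have hcu : 0 < ∑ i, c i * u i := by rw [← hteq] at hobj; simpa using hobj
      set lam : ℝ := (d - ∑ j, c j * x0 j + 1) / (∑ i, c i * u i) with hlam
      have hfeas : ∀ i, G1.mulVec (x0 + lam • u) i ≤ h1 i := by
        intro i
        have h1' := hrow i
        rw [← hteq] at h1'
        simp only [zero_mul] at h1'
        have hlam0 : 0 ≤ lam := by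
          apply div_nonneg _ hcu.le
          have := h x0 hx0
          linarith
        have : G1.mulVec (x0 + lam • u) i = G1.mulVec x0 i + lam * G1.mulVec u i := by
          simp [Matrix.mulVec_add, Matrix.mulVec_smul, smul_eq_mul]
        rw [this]
        have : lam * G1.mulVec u i ≤ 0 := mul_nonpos_of_nonneg_of_nonpos hlam0 h1'
        linarith [hx0 i]
      have := h (x0 + lam • u) hfeas
      have hexp : ∑ j, c j * (x0 + lam • u) j
          = ∑ j, c j * x0 j + lam * ∑ j, c j * u j := by
        have he : ∀ j, c j * (x0 + lam • u) j = c j * x0 j + lam * (c j * u j) := by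
          intro j; simp only [Pi.add_apply, Pi.smul_apply, smul_eq_mul]; ring
        simp only [he, Finset.sum_add_distrib, Finset.mul_sum]
      rw [hexp, hlam, div_mul_cancel₀ _ hcu.ne'] at this
      linarith
    · -- t > 0
      set x := t⁻¹ • u with hx
      have hfeas : ∀ i, G1.mulVec x i ≤ h1 i := by
        intro i
        have := hrow i
        have : t⁻¹ * G1.mulVec u i ≤ t⁻¹ * (t * h1 i) :=
          mul_le_mul_of_nonneg_left this (inv_nonneg.mpr ht0)
        rw [inv_mul_cancel_left₀ htpos.ne'] at this
        simpa [hx, Matrix.mulVec_smul, smul_eq_mul] using this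
      have hle := h x hfeas
      have : ∑ j, c j * x j = t⁻¹ * ∑ i, c i * u i := by
        have he : ∀ j, c j * x j = t⁻¹ * (c j * u j) := by
          intro j; simp only [hx, Pi.smul_apply, smul_eq_mul]; ring
        simp only [he]; rw [Finset.mul_sum]
      rw [this] at hle
      have : t⁻¹ * (t * d) < t⁻¹ * ∑ i, c i * u i :=
        mul_lt_mul_of_pos_left hobj (inv_pos.mpr htpos)
      rw [inv_mul_cancel_left₀ htpos.ne'] at this
      linarith
end Affine

/-- Extended Farkas Lemma: given `P₁ = {x : G₁ x ≤ h₁}` nonempty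
and `P₂ = {x : G₂ x ≤ h₂}`, we have `P₁ ⊆ P₂` iff there exists an entrywise
nonnegative matrix `Z` with `Z G₁ = G₂` and `Z h₁ ≤ h₂` componentwise. -/
theorem stmt_12 (n m p : ℕ)
    (G1 : Matrix (Fin m) (Fin n) ℝ) (h1 : Fin m → ℝ)
    (G2 : Matrix (Fin p) (Fin n) ℝ) (h2 : Fin p → ℝ)
    (hne : ∃ x : Fin n → ℝ, ∀ i, G1.mulVec x i ≤ h1 i) :
    {x : Fin n → ℝ | ∀ i, G1.mulVec x i ≤ h1 i} ⊆
        {x : Fin n → ℝ | ∀ i, G2.mulVec x i ≤ h2 i}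
    ↔ ∃ Z : Matrix (Fin p) (Fin m) ℝ,
        (∀ i j, 0 ≤ Z i j) ∧ Z * G1 = G2 ∧ ∀ i, Z.mulVec h1 i ≤ h2 i := by
  constructor
  · intro hsub
    have key : ∀ i : Fin p, ∃ y : Fin m → ℝ, (∀ k, 0 ≤ y k) ∧
        (∀ j, ∑ k, y k * G1 k j = G2 i j) ∧ ∑ k, y k * h1 k ≤ h2 i := by
      intro i
      apply affine_farkas G1 h1 (fun j => G2 i j) (h2 i) hne
      intro x hx
      have := hsub hx i
      simpa [Matrix.mulVec, dotProduct] using this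
    choose Y hY0 hYG hYh using key
    refine ⟨Matrix.of Y, hY0, ?_, ?_⟩
    · ext i j
      simpa [Matrix.mul_apply] using hYG i j
    · intro i
      simpa [Matrix.mulVec, dotProduct] using hYh i
  · rintro ⟨Z, hZ0, hZG, hZh⟩ x hx i
    have : G2.mulVec x i = Z.mulVec (G1.mulVec x) i := by
      rw [Matrix.mulVec_mulVec, hZG]
    rw [this]
    have step1 : Z.mulVec (G1.mulVec x) i ≤ Z.mulVec h1 i := by
      simp only [Matrix.mulVec, dotProduct]
      exact Finset.sum_le_sum fun k _ => mul_le_mul_of_nonneg_left (hx k) (hZ0 i k)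
    exact step1.trans (hZh i)
end

section
/- Let n, m, N be positive integers, δ ∈ ℝ^m with δ_j ≥ 0 for all j, and let the data consist of tuples (x̂_s, û_s, p_s, q_s) for s ∈ {1,…,N} with x̂_s, p_s, q_s ∈ ℝ^n and û_s ∈ ℝ^m. Define the consistency set 𝒫 = {(A, B) ∈ ℝ^{n×n} × ℝ^{n×m} : for all s, p_s ≤ A x̂_s + B û_s ≤ q_s componentwise}. Suppose there exist v ∈ ℝ^n with all entries positive, S ∈ ℝ^{m×n}, and a function M : ℝ^{n×n} × ℝ^{n×m} → ℝ^{n×n} such that for every (A, B) ∈ 𝒫: (a) Σ_{j=1}^n M(A,B)_{ij} < v_i for every i, and (b) for every β ∈ ∏_{j=1}^m {1-δ_j, 1+δ_j}, the entrywise inequalities -M(A,B) ≤ A·diag(v) + B·diag(β)·S ≤ M(A,B) hold. Then the state-feedback controller K = S·diag(v)^{-1} extended superstabilizes every consistent quantized plant: for every (A, B) ∈ 𝒫 and every Δ ∈ ℝ^m with |Δ_j| ≤ δ_j for all j, Σ_{j=1}^n |(A + B(I_m + diag(Δ))K)_{ij}| v_j < v_i for every i. -/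
/-- Box-to-vertex lemma: if an entrywise bound holds at all vertices of the box
`∏_j [1-δ_j, 1+δ_j]`, it holds throughout the box. -/
lemma box_bound {n m : ℕ} (δ : Fin m → ℝ) (hδ : ∀ j, 0 ≤ δ j)
    (v : Fin n → ℝ) (S : Matrix (Fin m) (Fin n) ℝ)
    (A : Matrix (Fin n) (Fin n) ℝ) (B : Matrix (Fin n) (Fin m) ℝ)
    (Mab : Matrix (Fin n) (Fin n) ℝ)
    (hvert : ∀ β : Fin m → ℝ, (∀ j, β j = 1 - δ j ∨ β j = 1 + δ j) → ∀ i j,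
        -(Mab i j) ≤ (A * Matrix.diagonal v + B * Matrix.diagonal β * S) i j ∧
        (A * Matrix.diagonal v + B * Matrix.diagonal β * S) i j ≤ Mab i j) :
    ∀ (T : Finset (Fin m)) (β : Fin m → ℝ),
      (∀ j, 1 - δ j ≤ β j ∧ β j ≤ 1 + δ j) →
      (∀ j ∉ T, β j = 1 - δ j ∨ β j = 1 + δ j) → ∀ i j,
      -(Mab i j) ≤ (A * Matrix.diagonal v + B * Matrix.diagonal β * S) i j ∧
      (A * Matrix.diagonal v + B * Matrix.diagonal β * S) i j ≤ Mab i j := by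
  intro T
  induction T using Finset.induction_on with
  | empty =>
      intro β hbox hout
      exact hvert β (fun j => hout j (Finset.notMem_empty j))
  | @insert j0 T hj0 IH =>
      intro β hbox hout i j
      set a := 1 - δ j0 with ha
      set b := 1 + δ j0 with hb
      have hab : a ≤ b := by simp [ha, hb]; linarith [hδ j0]
      have hmem : β j0 ∈ segment ℝ a b := by
        rw [segment_eq_Icc hab]
        exact ⟨(hbox j0).1, (hbox j0).2⟩
      obtain ⟨u, t, hu, ht, hut, hpt⟩ := hmem
      simp only [smul_eq_mul] at hpt
      set βm := Function.update β j0 a with hβm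
      set βp := Function.update β j0 b with hβp
      have hboxm : ∀ k, 1 - δ k ≤ βm k ∧ βm k ≤ 1 + δ k := by
        intro k
        by_cases hk : k = j0
        · subst hk; simp [hβm, ha]; linarith [hδ k]
        · simpa [hβm, Function.update_of_ne hk] using hbox k
      have hboxp : ∀ k, 1 - δ k ≤ βp k ∧ βp k ≤ 1 + δ k := by
        intro k
        by_cases hk : k = j0
        · subst hk; simp [hβp, hb]; linarith [hδ k]
        · simpa [hβp, Function.update_of_ne hk] using hbox k
      have houtm : ∀ k ∉ T, βm k = 1 - δ k ∨ βm k = 1 + δ k := by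
        intro k hk
        by_cases hkj : k = j0
        · subst hkj; left; simp [hβm, ha]
        · rw [hβm, Function.update_of_ne hkj]
          exact hout k (by simp [hkj, hk])
      have houtp : ∀ k ∉ T, βp k = 1 - δ k ∨ βp k = 1 + δ k := by
        intro k hk
        by_cases hkj : k = j0
        · subst hkj; right; simp [hβp, hb]
        · rw [hβp, Function.update_of_ne hkj]
          exact hout k (by simp [hkj, hk])
      have Hm := IH βm hboxm houtm i j
      have Hp := IH βp hboxp houtp i j
      -- entry-wise formula
      have hE : ∀ γ : Fin m → ℝ,
          (A * Matrix.diagonal v + B * Matrix.diagonal γ * S) i j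
            = (A * Matrix.diagonal v) i j + ∑ k, B i k * γ k * S k j := by
        intro γ
        have h2 : (B * Matrix.diagonal γ * S) i j = ∑ k, B i k * γ k * S k j := by
          rw [Matrix.mul_apply]
          exact Finset.sum_congr rfl fun k _ => by rw [Matrix.mul_diagonal]
        rw [Matrix.add_apply, h2]
      have hterm : ∀ k, B i k * β k * S k j
          = u * (B i k * βm k * S k j) + t * (B i k * βp k * S k j) := by
        intro k
        by_cases hk : k = j0
        · subst hk
          simp only [hβm, hβp, Function.update_self]
          linear_combination (B i k * S k j) * hpt.symm
        · rw [hβm, hβp, Function.update_of_ne hk, Function.update_of_ne hk]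
          linear_combination (B i k * β k * S k j) * hut.symm
      have hcomb : (A * Matrix.diagonal v + B * Matrix.diagonal β * S) i j
          = u * (A * Matrix.diagonal v + B * Matrix.diagonal βm * S) i j
            + t * (A * Matrix.diagonal v + B * Matrix.diagonal βp * S) i j := by
        rw [hE β, hE βm, hE βp]
        rw [Finset.sum_congr rfl (fun k _ => hterm k), Finset.sum_add_distrib,
          ← Finset.mul_sum, ← Finset.mul_sum]
        ring_nf
        linear_combination ((A * Matrix.diagonal v) i j) * hut.symm
      constructor
      · rw [hcomb]; nlinarith [Hm.1, Hp.1]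
      · rw [hcomb]; nlinarith [Hm.2, Hp.2]

/-- Data-driven quantized superstabilization. If there exist
weights `v > 0`, a matrix `S`, and a certificate function `M(A,B)` such that for
every data-consistent plant `(A,B)` the row sums of `M(A,B)` are below `v` and
`-M(A,B) ≤ A diag(v) + B diag(β) S ≤ M(A,B)` for every vertex
`β ∈ ∏_j {1-δ_j, 1+δ_j}`, then `K = S diag(v)⁻¹` extended superstabilizes every
consistent plant under every sector perturbation `|Δ_j| ≤ δ_j`. -/
theorem stmt_13 (n m N : ℕ) (hn : 0 < n) (hm : 0 < m) (hN : 0 < N)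
    (δ : Fin m → ℝ) (hδ : ∀ j, 0 ≤ δ j)
    (xhat : Fin N → Fin n → ℝ) (uhat : Fin N → Fin m → ℝ)
    (p q : Fin N → Fin n → ℝ)
    (v : Fin n → ℝ) (hv : ∀ i, 0 < v i)
    (S : Matrix (Fin m) (Fin n) ℝ)
    (M : Matrix (Fin n) (Fin n) ℝ → Matrix (Fin n) (Fin m) ℝ → Matrix (Fin n) (Fin n) ℝ)
    (hcert : ∀ (A : Matrix (Fin n) (Fin n) ℝ) (B : Matrix (Fin n) (Fin m) ℝ),
      (∀ s : Fin N, ∀ i : Fin n,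
        p s i ≤ (A.mulVec (xhat s) + B.mulVec (uhat s)) i ∧
        (A.mulVec (xhat s) + B.mulVec (uhat s)) i ≤ q s i) →
      (∀ i, ∑ j, M A B i j < v i) ∧
      (∀ β : Fin m → ℝ, (∀ j, β j = 1 - δ j ∨ β j = 1 + δ j) → ∀ i j,
        -(M A B i j) ≤ (A * Matrix.diagonal v + B * Matrix.diagonal β * S) i j ∧
        (A * Matrix.diagonal v + B * Matrix.diagonal β * S) i j ≤ M A B i j)) :
    ∀ (A : Matrix (Fin n) (Fin n) ℝ) (B : Matrix (Fin n) (Fin m) ℝ),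
      (∀ s : Fin N, ∀ i : Fin n,
        p s i ≤ (A.mulVec (xhat s) + B.mulVec (uhat s)) i ∧
        (A.mulVec (xhat s) + B.mulVec (uhat s)) i ≤ q s i) →
      ∀ Δ : Fin m → ℝ, (∀ j, |Δ j| ≤ δ j) → ∀ i,
        ∑ j, |(A + B * ((1 : Matrix (Fin m) (Fin m) ℝ) + Matrix.diagonal Δ) *
            (S * Matrix.diagonal (fun i => (v i)⁻¹))) i j| * v j < v i := by
  intro A B hdata Δ hΔ i
  obtain ⟨hrow, hvert⟩ := hcert A B hdata
  set β : Fin m → ℝ := fun j => 1 + Δ j with hβdef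
  have hbox : ∀ j, 1 - δ j ≤ β j ∧ β j ≤ 1 + δ j := by
    intro j
    have := abs_le.mp (hΔ j)
    constructor <;> simp [hβdef] <;> linarith [this.1, this.2]
  have hbnd := box_bound δ hδ v S A B (M A B) hvert Finset.univ β hbox
    (fun j hj => absurd (Finset.mem_univ j) hj)
  -- matrix identity
  set X : Matrix (Fin n) (Fin n) ℝ :=
    A + B * ((1 : Matrix (Fin m) (Fin m) ℝ) + Matrix.diagonal Δ) *
      (S * Matrix.diagonal (fun i => (v i)⁻¹)) with hX
  have hone : (1 : Matrix (Fin m) (Fin m) ℝ) + Matrix.diagonal Δ = Matrix.diagonal β := by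
    rw [← Matrix.diagonal_one, Matrix.diagonal_add]
  have hinv : Matrix.diagonal (fun i => (v i)⁻¹) * Matrix.diagonal v
      = (1 : Matrix (Fin n) (Fin n) ℝ) := by
    rw [Matrix.diagonal_mul_diagonal]
    have h0 : (fun i => (v i)⁻¹ * v i) = fun _ => (1 : ℝ) :=
      funext fun k => inv_mul_cancel₀ (hv k).ne'
    rw [h0, Matrix.diagonal_one]
  have hkey : X * Matrix.diagonal v = A * Matrix.diagonal v + B * Matrix.diagonal β * S := by
    rw [hX, Matrix.add_mul, hone]
    congr 1
    rw [Matrix.mul_assoc (B * Matrix.diagonal β), Matrix.mul_assoc S, hinv, Matrix.mul_one]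
  have hentry : ∀ j, X i j * v j = (A * Matrix.diagonal v + B * Matrix.diagonal β * S) i j := by
    intro j
    rw [← hkey, Matrix.mul_diagonal]
  have habs : ∀ j, |X i j| * v j ≤ M A B i j := by
    intro j
    have h1 : |X i j * v j| ≤ M A B i j := by
      rw [hentry j]
      exact abs_le.mpr (hbnd i j)
    rwa [abs_mul, abs_of_pos (hv j)] at h1
  calc ∑ j, |X i j| * v j ≤ ∑ j, M A B i j := Finset.sum_le_sum fun j _ => habs j
    _ < v i := hrow i
end

section
/- Let A ∈ ℝ^{n×n}, B ∈ ℝ^{n×m}, δ ∈ ℝ^m with δ_j ≥ 0, v ∈ ℝ^n with all entries positive, S ∈ ℝ^{m×n}, and M ∈ ℝ^{n×n} satisfy: (a) Σ_{j=1}^n M_{ij} < v_i for every i, and (b) for every Δ ∈ ℝ^m with |Δ_j| ≤ δ_j for all j, -M ≤ A·diag(v) + B(I_m + diag(Δ))S ≤ M entrywise. Let K = S·diag(v)^{-1}, and for each j let g_j : ℝ → ℝ satisfy |g_j(z) - z| ≤ δ_j |z| for all z ∈ ℝ. Define the quantized closed-loop map F(x) = A x + B ĝ(K x), where ĝ(u)_j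 = g_j(u_j), and set λ = max_i (Σ_{j=1}^n M_{ij}) / v_i, so that λ < 1. Then for every x ∈ ℝ^n, max_i |F(x)_i| / v_i ≤ λ · max_i |x_i| / v_i; consequently every trajectory x_{t+1} = F(x_t) satisfies max_i |(x_t)_i|/v_i ≤ λ^t · max_i |(x_0)_i|/v_i. -/
/-- Under the quantized extended superstabilization certificate
`(v, S, M)`, with `K = S diag(v)⁻¹`, sector-bounded quantizers `g j`, quantized
closed-loop map `F x = A x + B ĝ(K x)`, and `λ = max_i (∑_j M i j) / v i`, we
have `λ < 1`, the weighted sup-norm contracts by factor `λ` under `F`, and every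
trajectory of `F` decays geometrically with rate `λ`. -/
theorem stmt_15 (n m : ℕ) (hn : 0 < n)
    (A : Matrix (Fin n) (Fin n) ℝ) (B : Matrix (Fin n) (Fin m) ℝ)
    (δ : Fin m → ℝ) (hδ : ∀ j, 0 ≤ δ j)
    (v : Fin n → ℝ) (hv : ∀ i, 0 < v i)
    (S : Matrix (Fin m) (Fin n) ℝ) (M : Matrix (Fin n) (Fin n) ℝ)
    (ha : ∀ i, ∑ j, M i j < v i)
    (hb : ∀ Δ : Fin m → ℝ, (∀ j, |Δ j| ≤ δ j) → ∀ i j,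
      -(M i j) ≤ (A * Matrix.diagonal v
          + B * ((1 : Matrix (Fin m) (Fin m) ℝ) + Matrix.diagonal Δ) * S) i j ∧
      (A * Matrix.diagonal v
          + B * ((1 : Matrix (Fin m) (Fin m) ℝ) + Matrix.diagonal Δ) * S) i j ≤ M i j)
    (K : Matrix (Fin m) (Fin n) ℝ)
    (hK : K = S * Matrix.diagonal (fun i => (v i)⁻¹))
    (g : Fin m → ℝ → ℝ) (hg : ∀ j z, |g j z - z| ≤ δ j * |z|)
    (F : (Fin n → ℝ) → (Fin n → ℝ))
    (hF : ∀ x, F x = A.mulVec x + B.mulVec (fun j => g j (K.mulVec x j)))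
    (lam : ℝ)
    (hlam : lam = Finset.univ.sup'
      (Finset.univ_nonempty_iff.mpr (Fin.pos_iff_nonempty.mp hn))
      (fun i => (∑ j, M i j) / v i)) :
    lam < 1 ∧
    (∀ x : Fin n → ℝ,
      Finset.univ.sup' (Finset.univ_nonempty_iff.mpr (Fin.pos_iff_nonempty.mp hn))
          (fun i => |F x i| / v i)
        ≤ lam * Finset.univ.sup' (Finset.univ_nonempty_iff.mpr (Fin.pos_iff_nonempty.mp hn))
          (fun i => |x i| / v i)) ∧
    (∀ x : ℕ → Fin n → ℝ, (∀ t, x (t + 1) = F (x t)) → ∀ t,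
      Finset.univ.sup' (Finset.univ_nonempty_iff.mpr (Fin.pos_iff_nonempty.mp hn))
          (fun i => |x t i| / v i)
        ≤ lam ^ t * Finset.univ.sup' (Finset.univ_nonempty_iff.mpr (Fin.pos_iff_nonempty.mp hn))
          (fun i => |x 0 i| / v i)) := by
  have ne : (Finset.univ : Finset (Fin n)).Nonempty :=
    Finset.univ_nonempty_iff.mpr (Fin.pos_iff_nonempty.mp hn)
  -- M is entrywise nonnegative
  have hM : ∀ i j, 0 ≤ M i j := by
    intro i j
    have h := hb (fun _ => 0) (fun j => by simp [hδ j]) i j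
    linarith [h.1, h.2]
  have hlam0 : 0 ≤ lam := by
    rw [hlam]
    refine le_trans ?_ (Finset.le_sup' _ (Finset.mem_univ ⟨0, hn⟩))
    exact div_nonneg (Finset.sum_nonneg fun j _ => hM _ j) (hv _).le
  have hlam1 : lam < 1 := by
    rw [hlam]
    refine (Finset.sup'_lt_iff ne).mpr fun i _ => ?_
    rw [div_lt_one (hv i)]
    exact ha i
  have hcontr : ∀ x : Fin n → ℝ,
      Finset.univ.sup' ne (fun i => |F x i| / v i)
        ≤ lam * Finset.univ.sup' ne (fun i => |x i| / v i) := by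
    intro x
    set ρ := Finset.univ.sup' ne (fun i => |x i| / v i) with hρ
    have hρ0 : ∀ k, |x k| / v k ≤ ρ := by
      intro k; rw [hρ]
      exact Finset.le_sup' (fun i => |x i| / v i) (Finset.mem_univ k)
    have hρnn : 0 ≤ ρ :=
      le_trans (div_nonneg (abs_nonneg _) (hv _).le) (hρ0 ⟨0, hn⟩)
    set y : Fin n → ℝ := fun k => x k / v k with hy
    set u : Fin m → ℝ := K.mulVec x with hu
    have huS : u = S.mulVec y := by
      have hdx : (Matrix.diagonal fun i => (v i)⁻¹).mulVec x = y := by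
        funext k
        rw [Matrix.mulVec_diagonal]
        simp [hy, div_eq_inv_mul]
      rw [hu, hK, ← Matrix.mulVec_mulVec, hdx]
    set Δ : Fin m → ℝ := fun j => if u j = 0 then 0 else (g j (u j) - u j) / u j with hΔdef
    have hΔ : ∀ j, |Δ j| ≤ δ j := by
      intro j
      by_cases h : u j = 0
      · simp [hΔdef, h, hδ j]
      · simp only [hΔdef, h, if_false]
        rw [abs_div, div_le_iff₀ (abs_pos.mpr h)]
        exact hg j (u j)
    have hgu : ∀ j, g j (u j) = (1 + Δ j) * u j := by
      intro j
      by_cases h : u j = 0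
      · have := hg j (u j)
        rw [h] at this ⊢
        simp at this
        simp [this]
      · simp only [hΔdef, h, if_false]
        field_simp
        ring
    set C : Matrix (Fin n) (Fin n) ℝ :=
      A * Matrix.diagonal v + B * ((1 : Matrix (Fin m) (Fin m) ℝ) + Matrix.diagonal Δ) * S
      with hC
    have hCM : ∀ i j, |C i j| ≤ M i j := by
      intro i j
      have h := hb Δ hΔ i j
      rw [abs_le]
      exact ⟨neg_le.mp (neg_le.mpr (by linarith [h.1])), h.2⟩
    have hFx : F x = C.mulVec y := by
      have hdiagy : (Matrix.diagonal v).mulVec y = x := by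
        funext k
        rw [Matrix.mulVec_diagonal, hy]
        rw [mul_comm, div_mul_cancel₀ _ (hv k).ne']
      have hstep : ((1 : Matrix (Fin m) (Fin m) ℝ) + Matrix.diagonal Δ).mulVec u
          = fun j => g j (u j) := by
        funext j
        rw [Matrix.add_mulVec, Matrix.one_mulVec, Pi.add_apply, Matrix.mulVec_diagonal, hgu j]
        ring
      rw [hF, hC, Matrix.add_mulVec, ← Matrix.mulVec_mulVec, ← Matrix.mulVec_mulVec,
        ← Matrix.mulVec_mulVec, hdiagy, ← huS, hstep, ← hu]
    refine Finset.sup'_le ne _ fun i _ => ?_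
    have h1 : |F x i| ≤ (∑ k, M i k) * ρ := by
      rw [hFx]
      calc |C.mulVec y i| = |∑ k, C i k * y k| := by
            simp [Matrix.mulVec, dotProduct]
        _ ≤ ∑ k, |C i k * y k| := Finset.abs_sum_le_sum_abs _ _
        _ ≤ ∑ k, M i k * ρ := by
            refine Finset.sum_le_sum fun k _ => ?_
            rw [abs_mul]
            have hyk : |y k| ≤ ρ := by
              simpa [hy, abs_div, abs_of_pos (hv k)] using hρ0 k
            exact mul_le_mul (hCM i k) hyk (abs_nonneg _) (hM i k)
        _ = (∑ k, M i k) * ρ := by rw [Finset.sum_mul]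
    have h2 : (∑ k, M i k) ≤ lam * v i := by
      have := Finset.le_sup' (fun i => (∑ j, M i j) / v i) (Finset.mem_univ i)
      rw [← hlam] at this
      exact (div_le_iff₀ (hv i)).mp this
    rw [div_le_iff₀ (hv i)]
    calc |F x i| ≤ (∑ k, M i k) * ρ := h1
      _ ≤ (lam * v i) * ρ := by
          exact mul_le_mul_of_nonneg_right h2 hρnn
      _ = lam * ρ * v i := by ring
  refine ⟨hlam1, hcontr, fun x hx t => ?_⟩
  induction t with
  | zero => simp
  | succ t ih =>
      calc Finset.univ.sup' ne (fun i => |x (t + 1) i| / v i)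
          = Finset.univ.sup' ne (fun i => |F (x t) i| / v i) := by rw [hx t]
        _ ≤ lam * Finset.univ.sup' ne (fun i => |x t i| / v i) := hcontr (x t)
        _ ≤ lam * (lam ^ t * Finset.univ.sup' ne (fun i => |x 0 i| / v i)) :=
            mul_le_mul_of_nonneg_left ih hlam0
        _ = lam ^ (t + 1) * Finset.univ.sup' ne (fun i => |x 0 i| / v i) := by ring
end
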